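/- arXiv:2309.10796 — 3 statements merged into one kernel-verified Lean document; each statement's English description precedes it below -/
import Mathlib

section
/- First part of the optimal refuelling strategy (Lemma 1, case c(v_n) < c(v_{n+1})): let x be an optimal plan and let i < n−1 be an index with x i > 0, x (i+1) > 0, and c i < c (i+1). Then the tank is filled up entirely at stop i, i.e. f i + x i = Q. (Otherwise, transferring a small positive amount of purchase from stop i+1 to stop i would yield a feasible plan of strictly smaller cost.) -/
/-- Fuel level recursion on ℕ: level 0 is the initial fuel `q0`, and the level after
stop `i` is the previous level plus the refuel amount `x i` minus the consumption `d i`. -/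
noncomputable def fuelNat (q0 : ℝ) (d x : ℕ → ℝ) : ℕ → ℝ
  | 0 => q0
  | i + 1 => fuelNat q0 d x i + x i - d i

/-- Fuel levels `f : Fin (n+1) → ℝ` of a plan `x : Fin n → ℝ` with consumptions `d`,
initial fuel `q0`: `f 0 = q0` and `f (i+1) = f i + x i - d i`. -/
noncomputable def fuel {n : ℕ} (q0 : ℝ) (d x : Fin n → ℝ) (i : Fin (n + 1)) : ℝ :=
  fuelNat q0 (fun j => if h : j < n then d ⟨j, h⟩ else 0)
    (fun j => if h : j < n then x ⟨j, h⟩ else 0) i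

/-- A plan `x` is feasible (for tank capacity `Q` and initial fuel `q0`) if for every stop `i`:
`x i ≥ 0`, `f i + x i ≤ Q`, and `f (i+1) ≥ 0`. -/
def Feasible {n : ℕ} (Q q0 : ℝ) (d x : Fin n → ℝ) : Prop :=
  ∀ i : Fin n, 0 ≤ x i ∧ fuel q0 d x i.castSucc + x i ≤ Q ∧ 0 ≤ fuel q0 d x i.succ

/-- Cost of a plan: `Σ_i (c i) * (x i)`. -/
noncomputable def cost {n : ℕ} (c x : Fin n → ℝ) : ℝ := ∑ i, c i * x i

lemma fuelNat_diff (q0 : ℝ) (D X Y : ℕ → ℝ) (i : ℕ) (ε : ℝ)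
    (h : ∀ j, Y j = X j + (if j = i then ε else 0) - (if j = i + 1 then ε else 0)) :
    ∀ k, fuelNat q0 D Y k = fuelNat q0 D X k + (if k = i + 1 then ε else 0)
  | 0 => by simp [fuelNat]
  | k + 1 => by
    have ih := fuelNat_diff q0 D X Y i ε h k
    simp only [fuelNat, ih, h k]
    split_ifs <;> first | ring1 | omega

/-- Lemma 1, case `c i < c (i+1)`: at an optimal plan, if stops `i` and `i+1`
are refuelling stops with `c i < c (i+1)` and `i < n-1`, the tank is filled up entirely at
stop `i`: `f i + x i = Q`. -/
theorem optimal_fill_up_when_next_pricier {n : ℕ} (Q q0 : ℝ) (hQ : 0 < Q)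
    (hq0 : 0 ≤ q0 ∧ q0 ≤ Q) (d c : Fin n → ℝ)
    (hd : ∀ i, 0 ≤ d i ∧ d i ≤ Q) (hc : ∀ i, 0 ≤ c i)
    (x : Fin n → ℝ) (hfeas : Feasible Q q0 d x)
    (hopt : ∀ y : Fin n → ℝ, Feasible Q q0 d y → cost c x ≤ cost c y)
    (i : Fin n) (hi : (i : ℕ) + 1 < n)
    (hxi : 0 < x i) (hxi1 : 0 < x ⟨(i : ℕ) + 1, hi⟩)
    (hci : c i < c ⟨(i : ℕ) + 1, hi⟩) :
    fuel q0 d x i.castSucc + x i = Q := by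
  by_contra hne
  set i1 : Fin n := ⟨(i : ℕ) + 1, hi⟩ with hi1
  have hvi1 : (i1 : ℕ) = (i : ℕ) + 1 := rfl
  have hflt : fuel q0 d x i.castSucc + x i < Q := lt_of_le_of_ne (hfeas i).2.1 hne
  set ε : ℝ := min (Q - (fuel q0 d x i.castSucc + x i)) (x i1) with hεdef
  have hεpos : 0 < ε := lt_min (by linarith) hxi1
  have hε1 : ε ≤ Q - (fuel q0 d x i.castSucc + x i) := min_le_left _ _
  have hε2 : ε ≤ x i1 := min_le_right _ _
  set y : Fin n → ℝ := fun j =>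
    x j + (if j = i then ε else 0) - (if j = i1 then ε else 0) with hy
  have hii1 : i ≠ i1 := by
    intro h
    have h2 := congrArg Fin.val h
    rw [hvi1] at h2
    omega
  have hfuel : ∀ k : Fin (n + 1),
      fuel q0 d y k = fuel q0 d x k + (if (k : ℕ) = (i : ℕ) + 1 then ε else 0) := by
    intro k
    simp only [fuel]
    apply fuelNat_diff
    intro j
    by_cases hj : j < n
    · have c1 : ((⟨j, hj⟩ : Fin n) = i) ↔ j = (i : ℕ) :=
        ⟨fun h => congrArg Fin.val h, fun h => Fin.ext h⟩
      have c2 : ((⟨j, hj⟩ : Fin n) = i1) ↔ j = (i : ℕ) + 1 :=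
        ⟨fun h => by have := congrArg Fin.val h; rwa [hvi1] at this,
         fun h => Fin.ext (by rw [hvi1]; exact h)⟩
      simp only [hj, dif_pos, hy, c1, c2]
    · have h1 : j ≠ (i : ℕ) := by omega
      have h2 : j ≠ (i : ℕ) + 1 := by omega
      simp [hj, h1, h2]
  have hyfeas : Feasible Q q0 d y := by
    intro j
    obtain ⟨ha, hb, hcc⟩ := hfeas j
    have hf1 := hfuel j.castSucc
    have hf2 := hfuel j.succ
    simp only [Fin.coe_castSucc, Fin.val_succ] at hf1 hf2
    have hyj : y j = x j + (if j = i then ε else 0) - (if j = i1 then ε else 0) := rfl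
    by_cases hji : j = i
    · have hyv : y j = x j + ε := by
        rw [hyj, if_pos hji, if_neg (by rw [hji]; exact hii1)]; ring
      have hne1 : ¬((j : ℕ) = (i : ℕ) + 1) := by rw [hji]; omega
      have heq2 : (j : ℕ) + 1 = (i : ℕ) + 1 := by rw [hji]
      rw [if_neg hne1] at hf1
      rw [if_pos heq2] at hf2
      have hfe : fuel q0 d x j.castSucc = fuel q0 d x i.castSucc := by rw [hji]
      have hxe : x j = x i := by rw [hji]
      refine ⟨by rw [hyv]; linarith, ?_, by rw [hf2]; linarith⟩
      rw [hf1, hyv] at *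
      rw [hfe, hxe]
      linarith
    · by_cases hji1 : j = i1
      · have hyv : y j = x j - ε := by
          rw [hyj, if_neg hji, if_pos hji1]; ring
        have heq1 : (j : ℕ) = (i : ℕ) + 1 := by rw [hji1]
        have hne2 : ¬((j : ℕ) + 1 = (i : ℕ) + 1) := by rw [heq1]; omega
        rw [if_pos heq1] at hf1
        rw [if_neg hne2] at hf2
        have hxe : x j = x i1 := by rw [hji1]
        exact ⟨by rw [hyv, hxe]; linarith, by rw [hf1, hyv]; linarith,
          by rw [hf2]; linarith⟩
      · have hyv : y j = x j := by rw [hyj, if_neg hji, if_neg hji1]; ring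
        have hne1 : ¬((j : ℕ) = (i : ℕ) + 1) := fun h =>
          hji1 (Fin.ext (by rw [hvi1]; exact h))
        have hne2 : ¬((j : ℕ) + 1 = (i : ℕ) + 1) := fun h =>
          hji (Fin.ext (by omega))
        rw [if_neg hne1] at hf1
        rw [if_neg hne2] at hf2
        exact ⟨by rw [hyv]; exact ha, by rw [hf1, hyv]; linarith,
          by rw [hf2]; linarith⟩
  have hcost : cost c y = cost c x + c i * ε - c i1 * ε := by
    simp only [cost, hy, mul_sub, mul_add, Finset.sum_sub_distrib, Finset.sum_add_distrib,
      mul_ite, mul_zero, Finset.sum_ite_eq', Finset.mem_univ, if_pos]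
  have hle := hopt y hyfeas
  rw [hcost] at hle
  nlinarith [hεpos, hci]
end

section
/- Second part of the optimal refuelling strategy (Lemma 1, case c(v_n) ≥ c(v_{n+1}), strict version): let x be an optimal plan and let i < n−1 be an index with x i > 0 and c i > c (i+1). Then at stop i the vehicle buys only enough fuel to reach stop i+1 with an empty tank, i.e. f (i+1) = 0. (Otherwise, transferring the amount min(x i, f (i+1)) > 0 of purchase from stop i to stop i+1 would yield a feasible plan of strictly smaller cost.) -/
/-!
If `f (i+1) > 0`, move `ε = min (x i) (f (i+1)) > 0` of the purchase from stop `i` to the cheaper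
stop `i+1`. Only the level `f (i+1)` changes, dropping by `ε` to a value `≥ 0`, and the extra fuel
bought at `i+1` restores the old level there, so the plan stays feasible while its cost drops by
`ε * (c i - c (i+1)) > 0`.
-/

section
variable {n : ℕ} (q0 : ℝ) (d x : Fin n → ℝ)

@[simp]
lemma fuel_zero : fuel q0 d x 0 = q0 := rfl

lemma fuel_succ (i : Fin n) : fuel q0 d x i.succ = fuel q0 d x i.castSucc + x i - d i := by
  simp [fuel, fuelNat]

end

noncomputable def transferPurchase {n : ℕ} (x : Fin n → ℝ) (a b : Fin n) (ε : ℝ) : Fin n → ℝ :=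
  x - Pi.single a ε + Pi.single b ε

section
variable {n : ℕ} (x : Fin n → ℝ) (a b : Fin n) (ε : ℝ)

lemma transferPurchase_apply (j : Fin n) :
    transferPurchase x a b ε j = x j - (if j = a then ε else 0) + (if j = b then ε else 0) := by
  simp [transferPurchase, Pi.single_apply]

lemma cost_transferPurchase (c : Fin n → ℝ) :
    cost c (transferPurchase x a b ε) = cost c x + ε * (c b - c a) := by
  simp only [cost, transferPurchase_apply, mul_add, mul_sub, mul_ite, mul_zero,
    Finset.sum_add_distrib, Finset.sum_sub_distrib, Finset.sum_ite_eq', Finset.mem_univ, if_true]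
  ring

lemma fuel_transferPurchase (q0 : ℝ) (d : Fin n → ℝ) (hab : a < b) (k : Fin (n + 1)) :
    fuel q0 d (transferPurchase x a b ε) k =
      fuel q0 d x k - if a.castSucc < k ∧ k ≤ b.castSucc then ε else 0 := by
  induction k using Fin.induction with
  | zero => simp
  | succ j ih =>
    rw [fuel_succ, fuel_succ, ih, transferPurchase_apply]
    simp only [Fin.castSucc_lt_succ_iff, Fin.succ_le_castSucc_iff, Fin.castSucc_lt_castSucc_iff,
      Fin.castSucc_le_castSucc_iff]
    rw [Fin.lt_def] at hab
    split_ifs <;> simp only [Fin.lt_def, Fin.le_def, Fin.ext_iff] at * <;> first | omega | ring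
end

lemma feasible_transferPurchase {n : ℕ} {Q q0 : ℝ} {d x : Fin n → ℝ} {a b : Fin n} {ε : ℝ}
    (hx : Feasible Q q0 d x) (hab : a < b) (hε : 0 ≤ ε) (hεx : ε ≤ x a)
    (hεfuel : ∀ k : Fin n, a ≤ k → k < b → ε ≤ fuel q0 d x k.succ) :
    Feasible Q q0 d (transferPurchase x a b ε) := by
  intro j
  obtain ⟨hxj, hcap, hfuel⟩ := hx j
  have hj_bought : j ≠ a ∨ ε ≤ x j := by
    rcases eq_or_ne j a with rfl | h
    exacts [Or.inr hεx, Or.inl h]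
  have hj_fuel : ¬(a ≤ j ∧ j < b) ∨ ε ≤ fuel q0 d x j.succ := by
    by_cases h : a ≤ j ∧ j < b
    exacts [Or.inr (hεfuel j h.1 h.2), Or.inl h]
  simp only [transferPurchase_apply, fuel_transferPurchase x a b ε q0 d hab,
    Fin.castSucc_lt_castSucc_iff, Fin.castSucc_le_castSucc_iff, Fin.castSucc_lt_succ_iff,
    Fin.succ_le_castSucc_iff]
  rcases hj_bought with hj_bought | hj_bought <;> rcases hj_fuel with hj_fuel | hj_fuel <;>
    split_ifs <;> simp only [Fin.lt_def, Fin.le_def, Fin.ext_iff] at * <;>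
    refine ⟨?_, ?_, ?_⟩ <;> first | omega | linarith

theorem optimal_just_enough_when_next_cheaper_general {n : ℕ} (Q q0 : ℝ)
    (d c : Fin n → ℝ)
    (x : Fin n → ℝ) (hfeas : Feasible Q q0 d x)
    (hopt : ∀ y : Fin n → ℝ, Feasible Q q0 d y → cost c x ≤ cost c y)
    (i : Fin n) (hi : (i : ℕ) + 1 < n)
    (hxi : 0 < x i) (hci : c ⟨(i : ℕ) + 1, hi⟩ < c i) :
    fuel q0 d x i.succ = 0 := by
  by_contra hne
  have hfuel : 0 < fuel q0 d x i.succ := lt_of_le_of_ne (hfeas i).2.2 (Ne.symm hne)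
  set ε := min (x i) (fuel q0 d x i.succ)
  have hε : 0 < ε := lt_min hxi hfuel
  have hlt : i < ⟨(i : ℕ) + 1, hi⟩ := Fin.lt_def.2 (Nat.lt_succ_self _)
  have hy : Feasible Q q0 d (transferPurchase x i ⟨(i : ℕ) + 1, hi⟩ ε) := by
    refine feasible_transferPurchase hfeas hlt hε.le (min_le_left _ _) fun k hik hki => ?_
    obtain rfl : k = i := le_antisymm (Fin.le_def.2 (Nat.le_of_lt_succ (Fin.lt_def.1 hki))) hik
    exact min_le_right _ _
  have := hopt _ hy
  rw [cost_transferPurchase] at this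
  nlinarith [mul_pos hε (sub_pos.2 hci)]

/-- Lemma 1, case `c i > c (i+1)`, strict version: at an optimal plan, if
stop `i < n-1` is a refuelling stop and `c i > c (i+1)`, then the vehicle buys only enough
fuel at `i` to reach stop `i+1` with an empty tank: `f (i+1) = 0`. -/
theorem optimal_just_enough_when_next_cheaper {n : ℕ} (Q q0 : ℝ) (hQ : 0 < Q)
    (hq0 : 0 ≤ q0 ∧ q0 ≤ Q) (d c : Fin n → ℝ)
    (hd : ∀ i, 0 ≤ d i ∧ d i ≤ Q) (hc : ∀ i, 0 ≤ c i)
    (x : Fin n → ℝ) (hfeas : Feasible Q q0 d x)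
    (hopt : ∀ y : Fin n → ℝ, Feasible Q q0 d y → cost c x ≤ cost c y)
    (i : Fin n) (hi : (i : ℕ) + 1 < n)
    (hxi : 0 < x i) (hci : c ⟨(i : ℕ) + 1, hi⟩ < c i) :
    fuel q0 d x i.succ = 0 :=
  optimal_just_enough_when_next_cheaper_general Q q0 d c x hfeas hopt i hi hxi hci
end

section
/- Suppose the initial fuel is q0 = 0 and every price is strictly positive (c i > 0 for all i). Then every optimal plan x reaches the goal with an empty tank: f n = 0. (If f n > 0 there is a last index j with x j > 0, since otherwise f n = −Σ_i d i ≤ 0; because no fuel is purchased after stop j, the levels f i for i > j are nonincreasing, hence all strictly positive, and reducing x j by a sufficiently small positive amount gives a feasible plan of strictly smaller cost.) -/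
lemma fuelNat_sum (q0 : ℝ) (d x : ℕ → ℝ) (i : ℕ) :
    fuelNat q0 d x i = q0 + ∑ k ∈ Finset.range i, (x k - d k) := by
  induction i with
  | zero => simp [fuelNat]
  | succ i ih => rw [fuelNat, ih, Finset.sum_range_succ]; ring

lemma fuelNat_update (q0 ε : ℝ) (d x : ℕ → ℝ) (j : ℕ) (i : ℕ) :
    fuelNat q0 d (fun k => x k - if k = j then ε else 0) i
      = fuelNat q0 d x i - (if j < i then ε else 0) := by
  induction i with
  | zero => simp [fuelNat]
  | succ i ih =>
    rw [fuelNat, ih, fuelNat]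
    by_cases h1 : j < i
    · have h2 : j < i + 1 := by omega
      have h3 : ¬ i = j := by omega
      simp only [if_pos h1, if_pos h2, if_neg h3]
      ring
    · by_cases h2 : i = j
      · have h3 : j < i + 1 := by omega
        simp only [if_neg h1, if_pos h2, if_pos h3]
        ring
      · have h3 : ¬ j < i + 1 := by omega
        simp only [if_neg h1, if_neg h2, if_neg h3]
        ring

lemma fuelNat_anti (q0 : ℝ) (d x : ℕ → ℝ) (hd : ∀ t, 0 ≤ d t) (m : ℕ)
    (hx : ∀ t, m ≤ t → x t = 0) : ∀ k, fuelNat q0 d x (m + k) ≤ fuelNat q0 d x m := by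
  intro k
  induction k with
  | zero => exact le_refl _
  | succ k ih =>
    have : m + (k + 1) = (m + k) + 1 := by omega
    rw [this, fuelNat, hx (m + k) (by omega)]
    have := hd (m + k)
    linarith

/-- with zero initial fuel and strictly positive prices, every optimal plan
reaches the goal with an empty tank: `f n = 0`. -/
theorem optimal_empty_tank_at_goal {n : ℕ} (hn : 0 < n) (Q : ℝ) (hQ : 0 < Q)
    (d c : Fin n → ℝ) (hd : ∀ i, 0 ≤ d i ∧ d i ≤ Q) (hc : ∀ i, 0 < c i)
    (x : Fin n → ℝ) (hfeas : Feasible Q 0 d x)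
    (hopt : ∀ y : Fin n → ℝ, Feasible Q 0 d y → cost c x ≤ cost c y) :
    fuel (0 : ℝ) d x (Fin.last n) = 0 := by
  by_contra hne
  set d' : ℕ → ℝ := fun k => if h : k < n then d ⟨k, h⟩ else 0 with hd'
  set x' : ℕ → ℝ := fun k => if h : k < n then x ⟨k, h⟩ else 0 with hx'
  have hd'0 : ∀ t, 0 ≤ d' t := by
    intro t
    by_cases h : t < n
    · simp [hd', h]; exact (hd ⟨t, h⟩).1
    · simp [hd', h]
  have hfuel : ∀ i : Fin (n + 1), fuel (0 : ℝ) d x i = fuelNat 0 d' x' i.val := fun _ => rfl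
  -- final fuel level
  set F : ℝ := fuelNat 0 d' x' n with hF
  have hlast : fuel (0 : ℝ) d x (Fin.last n) = F := by rw [hfuel]; rfl
  have hFnonneg : 0 ≤ F := by
    have h := (hfeas ⟨n - 1, by omega⟩).2.2
    rw [hfuel] at h
    have : ((⟨n - 1, by omega⟩ : Fin n).succ : ℕ) = n := by simp; omega
    rwa [this] at h
  have hFpos : 0 < F := lt_of_le_of_ne hFnonneg (fun h => hne (by rw [hlast, ← h]))
  -- existence of a stop with positive refuel
  have hex : ∃ i : Fin n, 0 < x i := by
    by_contra hno
    push_neg at hno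
    have hx0 : ∀ i : Fin n, x i = 0 := fun i => le_antisymm (hno i) (hfeas i).1
    have : F ≤ 0 := by
      rw [hF, fuelNat_sum, zero_add]
      apply Finset.sum_nonpos
      intro k hk
      rw [Finset.mem_range] at hk
      simp only [hx', hd', dif_pos hk, hx0]
      have := (hd ⟨k, hk⟩).1
      linarith
    linarith
  set S : Finset (Fin n) := Finset.univ.filter (fun i => 0 < x i) with hS
  have hSne : S.Nonempty := by
    obtain ⟨i, hi⟩ := hex
    exact ⟨i, by simp [hS, hi]⟩
  set j : Fin n := S.max' hSne with hj
  have hxj : 0 < x j := by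
    have := S.max'_mem hSne
    simp [hS] at this
    exact this
  have hjmax : ∀ i : Fin n, j < i → x i = 0 := by
    intro i hi
    by_contra h
    have hxi : 0 < x i := lt_of_le_of_ne (hfeas i).1 (Ne.symm h)
    have : i ≤ j := S.le_max' i (by simp [hS, hxi])
    exact absurd hi (not_lt.mpr this)
  have hx'0 : ∀ t, j.val + 1 ≤ t → x' t = 0 := by
    intro t ht
    by_cases h : t < n
    · simp only [hx', dif_pos h]
      apply hjmax
      exact Fin.lt_def.mpr (show (j : ℕ) < t by omega)
    · simp [hx', h]
  -- fuel levels after j are at least F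
  have hmono : ∀ i, j.val + 1 ≤ i → i ≤ n → F ≤ fuelNat 0 d' x' i := by
    intro i h1 h2
    have := fuelNat_anti 0 d' x' hd'0 i (fun t ht => hx'0 t (by omega)) (n - i)
    rw [hF]
    have hni : i + (n - i) = n := by omega
    rwa [hni] at this
  set ε : ℝ := min (x j) F with hε
  have hεpos : 0 < ε := lt_min hxj hFpos
  have hεxj : ε ≤ x j := min_le_left _ _
  have hεF : ε ≤ F := min_le_right _ _
  set y : Fin n → ℝ := fun i => x i - if i = j then ε else 0 with hy
  have hy' : (fun k => if h : k < n then y ⟨k, h⟩ else 0)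
      = fun k => x' k - if k = j.val then ε else 0 := by
    funext k
    by_cases h : k < n
    · simp only [dif_pos h, hy, hx', Fin.ext_iff]
    · have : ¬ k = j.val := by have := j.isLt; omega
      simp [h, hx', this]
  have hyfuel : ∀ i : Fin (n + 1),
      fuel (0 : ℝ) d y i = fuelNat 0 d' x' i.val - (if j.val < i.val then ε else 0) := by
    intro i
    show fuelNat 0 d' _ i.val = _
    rw [hy', fuelNat_update]
  have hyfeas : Feasible Q 0 d y := by
    intro i
    refine ⟨?_, ?_, ?_⟩
    · by_cases h : i = j
      · have : y i = x i - ε := by simp [hy, h]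
        rw [this, h]; linarith
      · simp only [hy, if_neg h, sub_zero]; exact (hfeas i).1
    · rw [hyfuel]
      have h1 := (hfeas i).2.1
      rw [hfuel] at h1
      have hcast : (i.castSucc : ℕ) = i.val := rfl
      rw [hcast]
      rw [hcast] at h1
      have hy_le : y i ≤ x i := by
        by_cases h : i = j
        · simp only [hy, if_pos h]; linarith
        · simp only [hy, if_neg h, sub_zero]
          exact le_refl _
      have : (if j.val < i.val then ε else 0) ≥ 0 := by positivity
      linarith
    · rw [hyfuel]
      have hsucc : (i.succ : ℕ) = i.val + 1 := rfl
      rw [hsucc]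
      by_cases h : j.val < i.val + 1
      · rw [if_pos h]
        have := hmono (i.val + 1) (by omega) (by omega)
        linarith
      · rw [if_neg h, sub_zero]
        have h2 := (hfeas i).2.2
        rw [hfuel, Fin.val_succ] at h2
        exact h2
  have hcost : cost c y = cost c x - c j * ε := by
    simp only [cost, hy, mul_sub, Finset.sum_sub_distrib]
    congr 1
    rw [Finset.sum_congr rfl (fun i _ => mul_ite (i = j) (c i) ε 0)]
    simp [Finset.sum_ite_eq']
  have hle := hopt y hyfeas
  rw [hcost] at hle
  have hpos : 0 < c j * ε := mul_pos (hc j) hεpos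
  linarith
end
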